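/- Let c : ℝ → ℝ be smooth with c(0) = -4 and c'(0) = 0, and let Δ be the nonnegative Laplacian on a closed surface Σ. Suppose ω : ℝ → C^∞(Σ) is smooth with ω(0) = 0 and satisfies -4 = e^{-2ω(s)}(c̃(s) + Δ_s ω(s)) for a smooth family of curvature functions c̃(s) with c̃(s) = -4 + (1/2)κ̈s² + O(s³) and Laplacians Δ_s = Δ + O(s). Then the Taylor expansion ω(s) = sω₁ + s²ω₂ + O(s³) satisfies (Δ+8)ω₁ = 0 (hence ω₁ = 0) and (Δ+8)ω₂ = -κ̈/2. -/

import Mathlib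

/-!
Multiplying the equation by `e^{2ω}` gives `c̃ + Δ_s ω = -4 e^{2ω}`, and `|e^{2t} - 1 - 2t| ≤ 4t²`
for `|t| ≤ 1/2` makes `c̃ + Δ_s ω + 4 + 8ω = O(‖ω‖²)`. Substituting the expansions of `c̃`, `Δ_s`
and `ω`, the coefficients `A = (Δ+8)ω₁` and `B = (Δ+8)ω₂ + κ̈/2` satisfy `s A + s² B = O(s^{k+1})`
as soon as `ω = O(s^k)`, `1 ≤ k ≤ 2`. Taking `k = 1` forces `A = 0`, hence `ω₁ = 0` because
`Δ + 8` is injective; then `ω = O(s²)`, and `k = 2` forces `B = 0`.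
-/

open Asymptotics Filter Topology

section PowerAsymptotics

variable {𝕜 E : Type*} [NontriviallyNormedField 𝕜] [NormedAddCommGroup E] [NormedSpace 𝕜 E]

theorem isBigO_pow_pow_of_le {m n : ℕ} (h : m ≤ n) :
    (fun s : 𝕜 => s ^ n) =O[𝓝 0] fun s => s ^ m := by
  rcases h.eq_or_lt with rfl | hlt
  · exact isBigO_refl _ _
  · exact (isLittleO_pow_pow hlt).isBigO

theorem isBigO_pow_smul_const {m n : ℕ} (h : m ≤ n) (v : E) :
    (fun s : 𝕜 => s ^ n • v) =O[𝓝 0] fun s => s ^ m := by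
  simpa using (isBigO_pow_pow_of_le h).smul
    (isBigO_const_const v (one_ne_zero (α := 𝕜)) (𝓝 (0 : 𝕜)))

theorem eq_zero_of_pow_smul_isBigO_pow_succ {n : ℕ} {v : E}
    (h : (fun s : 𝕜 => s ^ n • v) =O[𝓝 0] fun s => s ^ (n + 1)) : v = 0 := by
  by_contra hv
  have hle : (fun s : 𝕜 => s ^ n) =O[𝓝 0] fun s => s ^ n • v :=
    IsBigO.of_bound ‖v‖⁻¹ <| Eventually.of_forall fun s => by
      rw [norm_smul, mul_comm, mul_inv_cancel_right₀ (norm_ne_zero_iff.mpr hv)]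
  have hne : ∃ᶠ s : 𝕜 in 𝓝 0, s ^ (n + 1) ≠ 0 :=
    (eventually_nhdsWithin_of_forall (s := {0}ᶜ) fun s hs =>
      pow_ne_zero _ hs).frequently.filter_mono nhdsWithin_le_nhds
  exact isLittleO_irrefl hne ((isLittleO_pow_pow n.lt_succ_self).trans_isBigO (hle.trans h))

end PowerAsymptotics

namespace ContinuousMap

variable {S : Type*} [TopologicalSpace S] [CompactSpace S]

theorem norm_add_four_add_eight_smul_le {f g : C(S, ℝ)}
    (hg : ∀ x, g x = -4 * Real.exp (2 * f x)) (hf : ‖f‖ ≤ 1 / 2) :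
    ‖g + 4 + (8 : ℝ) • f‖ ≤ 16 * ‖f‖ ^ 2 := by
  refine (ContinuousMap.norm_le _ (by positivity)).mpr fun x => ?_
  have hfx : |f x| ≤ ‖f‖ := f.norm_coe_le_norm x
  have hexp := Real.abs_exp_sub_one_sub_id_le (x := 2 * f x)
    (by rw [abs_mul, abs_two]; linarith)
  have hsq : f x ^ 2 ≤ ‖f‖ ^ 2 := sq_le_sq' (abs_le.mp hfx).1 (abs_le.mp hfx).2
  have hval : (g + 4 + (8 : ℝ) • f) x = -4 * (Real.exp (2 * f x) - 1 - 2 * f x) := by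
    have h4 : (4 : C(S, ℝ)) x = 4 := rfl
    simp only [add_apply, smul_apply, hg, h4, smul_eq_mul]
    ring
  rw [Real.norm_eq_abs, hval, abs_mul]
  norm_num
  nlinarith

theorem isBigO_add_four_add_eight_smul {α : Type*} {l : Filter α} {ω g : α → C(S, ℝ)}
    (hg : ∀ a x, g a x = -4 * Real.exp (2 * ω a x)) (hω : Tendsto ω l (𝓝 0)) :
    (fun a => g a + 4 + (8 : ℝ) • ω a) =O[l] fun a => ‖ω a‖ ^ 2 := by
  refine IsBigO.of_bound 16 ?_
  filter_upwards [hω.eventually (Metric.closedBall_mem_nhds 0 (by norm_num : (0 : ℝ) < 1 / 2))]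
    with a ha
  rw [norm_pow, norm_norm]
  exact norm_add_four_add_eight_smul_le (hg a) (mem_closedBall_zero_iff.mp ha)

end ContinuousMap

theorem taylor_coeffs_isBigO_pow_succ
    {S : Type*} [TopologicalSpace S] [CompactSpace S]
    {Δ : C(S, ℝ) →L[ℝ] C(S, ℝ)} {Dfam : ℝ → C(S, ℝ) →L[ℝ] C(S, ℝ)}
    (hD : (fun s : ℝ => ‖Dfam s - Δ‖) =O[𝓝 0] fun s : ℝ => s)
    {ctilde : ℝ → C(S, ℝ)} {κdd : C(S, ℝ)}
    (hc : (fun s : ℝ => ctilde s - ((-4 : C(S, ℝ)) + (s ^ 2 * (1 / 2)) • κdd))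
      =O[𝓝 0] fun s : ℝ => s ^ 3)
    {ω : ℝ → C(S, ℝ)} {ω₁ ω₂ : C(S, ℝ)}
    (hωexp : (fun s : ℝ => ω s - (s • ω₁ + s ^ 2 • ω₂)) =O[𝓝 0] fun s : ℝ => s ^ 3)
    (heq : ∀ s x, ctilde s x + Dfam s (ω s) x = -4 * Real.exp (2 * ω s x))
    {k : ℕ} (hk1 : 1 ≤ k) (hk2 : k ≤ 2) (hω : ω =O[𝓝 0] fun s => s ^ k) :
    (fun s : ℝ => s • (Δ ω₁ + (8 : ℝ) • ω₁)
        + s ^ 2 • (Δ ω₂ + (8 : ℝ) • ω₂ + (1 / 2 : ℝ) • κdd)) =O[𝓝 0] fun s => s ^ (k + 1) := by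
  have hωtendsto : Tendsto ω (𝓝 0) (𝓝 0) :=
    hω.trans_tendsto <| by
      simpa [zero_pow (by omega : k ≠ 0)] using (continuous_pow k).tendsto (0 : ℝ)
  have hnonlin : (fun s => ctilde s + Dfam s (ω s) + 4 + (8 : ℝ) • ω s)
      =O[𝓝 0] fun s => s ^ (k + 1) := by
    refine (ContinuousMap.isBigO_add_four_add_eight_smul (g := fun s => ctilde s + Dfam s (ω s))
      heq hωtendsto).trans ?_
    refine ((hω.norm_left.pow 2).congr_right fun s => by rw [← pow_mul]).trans ?_
    exact isBigO_pow_pow_of_le (by omega)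
  have hcurv := hc.trans (isBigO_pow_pow_of_le (𝕜 := ℝ) (by omega : k + 1 ≤ 3))
  have hpert : (fun s => (Dfam s - Δ) (ω s)) =O[𝓝 0] fun s => s ^ (k + 1) :=
    (isBoundedBilinearMap_apply.isBigO_comp (g := fun s => Dfam s - Δ) (h := ω)).trans <|
      (hD.mul hω.norm_left).congr_right fun s => (pow_succ' s k).symm
  have hrem : (fun s : ℝ => (Δ + (8 : ℝ) • ContinuousLinearMap.id ℝ C(S, ℝ))
      (ω s - (s • ω₁ + s ^ 2 • ω₂))) =O[𝓝 0] fun s => s ^ (k + 1) :=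
    (ContinuousLinearMap.isBigO_comp _ _ _).trans
      (hωexp.trans (isBigO_pow_pow_of_le (by omega)))
  refine (((hnonlin.sub hcurv).sub hpert).sub hrem).congr_left fun s => ?_
  simp only [add_apply, sub_apply, smul_apply, ContinuousLinearMap.id_apply, map_sub, map_add,
    map_smul]
  module

theorem uniformizing_conformal_factor_taylor_general
    {S : Type*} [TopologicalSpace S] [CompactSpace S]
    (Δ : C(S, ℝ) →L[ℝ] C(S, ℝ))
    (hΔpos : ∀ f : C(S, ℝ), Δ f + (8 : ℝ) • f = 0 → f = 0)
    (Dfam : ℝ → C(S, ℝ) →L[ℝ] C(S, ℝ))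
    (hD : (fun s : ℝ => ‖Dfam s - Δ‖) =O[nhds 0] fun s : ℝ => s)
    (ctilde : ℝ → C(S, ℝ)) (κdd : C(S, ℝ))
    (hc : (fun s : ℝ => ctilde s - ((-4 : C(S, ℝ)) + (s ^ 2 * (1 / 2)) • κdd))
      =O[nhds 0] fun s : ℝ => s ^ 3)
    (ω : ℝ → C(S, ℝ))
    (ω₁ ω₂ : C(S, ℝ))
    (hωexp : (fun s : ℝ => ω s - (s • ω₁ + s ^ 2 • ω₂)) =O[nhds 0] fun s : ℝ => s ^ 3)
    (heq : ∀ (s : ℝ) (x : S),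
      (-4 : ℝ) = Real.exp (-2 * ω s x) * (ctilde s x + (Dfam s) (ω s) x)) :
    (Δ ω₁ + (8 : ℝ) • ω₁ = 0 ∧ ω₁ = 0) ∧
    Δ ω₂ + (8 : ℝ) • ω₂ = (-(1 / 2) : ℝ) • κdd := by
  have heq' : ∀ s x, ctilde s x + Dfam s (ω s) x = -4 * Real.exp (2 * ω s x) := fun s x => by
    rw [heq s x, mul_right_comm, ← Real.exp_add]
    simp
  have hremainder : (fun s : ℝ => ω s - (s ^ 1 • ω₁ + s ^ 2 • ω₂)) =O[𝓝 0] fun s => s ^ 1 :=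
    (hωexp.congr_left fun s => by rw [pow_one]).trans (isBigO_pow_pow_of_le (by norm_num))
  have hω_first : ω =O[𝓝 0] fun s => s ^ 1 :=
    ((hremainder.add (isBigO_pow_smul_const le_rfl ω₁)).add
      (isBigO_pow_smul_const (by norm_num : 1 ≤ 2) ω₂)).congr_left fun s => by abel
  set B := Δ ω₂ + (8 : ℝ) • ω₂ + (1 / 2 : ℝ) • κdd
  have hfirst : Δ ω₁ + (8 : ℝ) • ω₁ = 0 := by
    have h := (taylor_coeffs_isBigO_pow_succ hD hc hωexp heq' le_rfl (by norm_num) hω_first).sub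
      (isBigO_pow_smul_const (m := 1 + 1) (n := 2) le_rfl B)
    exact eq_zero_of_pow_smul_isBigO_pow_succ (n := 1)
      (h.congr_left fun s => by rw [pow_one, add_sub_cancel_right])
  have hω₁ : ω₁ = 0 := hΔpos ω₁ hfirst
  have hω_second : ω =O[𝓝 0] fun s => s ^ 2 :=
    ((hωexp.trans (isBigO_pow_pow_of_le (by norm_num))).add
      (isBigO_pow_smul_const le_rfl ω₂)).congr_left fun s => by simp [hω₁]
  have hsecond : B = 0 := by
    have h := taylor_coeffs_isBigO_pow_succ hD hc hωexp heq' (by norm_num) le_rfl hω_second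
    exact eq_zero_of_pow_smul_isBigO_pow_succ (n := 2)
      (h.congr_left fun s => by rw [hfirst, smul_zero, zero_add])
  refine ⟨⟨hfirst, hω₁⟩, ?_⟩
  rw [neg_smul, ← add_eq_zero_iff_eq_neg]
  exact hsecond

/-- Determination of the Taylor coefficients of the uniformizing conformal factor.
Functions on the closed surface Σ are modeled as continuous functions C(Σ,ℝ) with the
sup norm; Δ is the nonnegative Laplacian (its positivity entering only through the
triviality of the kernel of Δ + 8), Δ_s = Δ + O(s) a family of operators, c̃(s) the
curvature family with c̃(s) = -4 + (1/2)κ̈ s² + O(s³), and ω(s) = sω₁ + s²ω₂ + O(s³)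
solves -4 = e^{-2ω(s)}(c̃(s) + Δ_s ω(s)). Then (Δ+8)ω₁ = 0 (hence ω₁ = 0) and
(Δ+8)ω₂ = -κ̈/2. -/
theorem uniformizing_conformal_factor_taylor
    {S : Type*} [TopologicalSpace S] [CompactSpace S]
    (Δ : C(S, ℝ) →L[ℝ] C(S, ℝ))
    (hΔpos : ∀ f : C(S, ℝ), Δ f + (8 : ℝ) • f = 0 → f = 0)
    (Dfam : ℝ → C(S, ℝ) →L[ℝ] C(S, ℝ))
    (hD : (fun s : ℝ => ‖Dfam s - Δ‖) =O[nhds 0] fun s : ℝ => s)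
    (ctilde : ℝ → C(S, ℝ)) (κdd : C(S, ℝ))
    (hc : (fun s : ℝ => ctilde s - ((-4 : C(S, ℝ)) + (s ^ 2 * (1 / 2)) • κdd))
      =O[nhds 0] fun s : ℝ => s ^ 3)
    (ω : ℝ → C(S, ℝ)) (hω0 : ω 0 = 0)
    (ω₁ ω₂ : C(S, ℝ))
    (hωexp : (fun s : ℝ => ω s - (s • ω₁ + s ^ 2 • ω₂)) =O[nhds 0] fun s : ℝ => s ^ 3)
    (heq : ∀ (s : ℝ) (x : S),
      (-4 : ℝ) = Real.exp (-2 * ω s x) * (ctilde s x + (Dfam s) (ω s) x)) :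
    (Δ ω₁ + (8 : ℝ) • ω₁ = 0 ∧ ω₁ = 0) ∧
    Δ ω₂ + (8 : ℝ) • ω₂ = (-(1 / 2) : ℝ) • κdd :=
  uniformizing_conformal_factor_taylor_general Δ hΔpos Dfam hD ctilde κdd hc ω ω₁ ω₂ hωexp heq
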